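/- For n ≥ 3 and α = (a,b) ∈ ℍ_ε^⊥ ⊂ A_{n+1} (i.e. a and b doubly pure in A_n): (1) αε = (ã, −b̃), and αε ∈ ℍ_ε^⊥; (2) αε̃ = α̃ε = −(αε)~ = (−b̃, −ã), and αε̃ ∈ ℍ_ε^⊥. -/
import Mathlib


noncomputable section

/-- The Cayley–Dickson algebra `A n` of dimension `2^n` over `ℝ`:
`A 0 = ℝ` and `A (n+1) = A n × A n`. -/
def CD : ℕ → Type
  | 0 => ℝ
  | n + 1 => CD n × CD n

namespace CD

instance instAddCommGroup : (n : ℕ) → AddCommGroup (CD n)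
  | 0 => inferInstanceAs (AddCommGroup ℝ)
  | n + 1 =>
    letI := instAddCommGroup n
    inferInstanceAs (AddCommGroup (CD n × CD n))

instance instModule : (n : ℕ) → Module ℝ (CD n)
  | 0 => inferInstanceAs (Module ℝ ℝ)
  | n + 1 =>
    letI := instAddCommGroup n
    letI := instModule n
    inferInstanceAs (Module ℝ (CD n × CD n))

/-- Conjugation: `x̄ = x` on `ℝ` and `(x₁,x₂)‾ = (x̄₁, -x₂)`. -/
protected def conj : {n : ℕ} → CD n → CD n
  | 0, x => x
  | _ + 1, x => (CD.conj x.1, -x.2)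

/-- Cayley–Dickson multiplication: `(a,b)(x,y) = (ax - ȳb, ya + bx̄)`. -/
protected def mul : {n : ℕ} → CD n → CD n → CD n
  | 0, x, y => (show ℝ from x) * (show ℝ from y)
  | _ + 1, x, y =>
    (CD.mul x.1 y.1 - CD.mul (CD.conj y.2) x.2,
     CD.mul y.2 x.1 + CD.mul x.2 (CD.conj y.1))

instance instMul (n : ℕ) : Mul (CD n) := ⟨CD.mul⟩

/-- The multiplicative unit `e₀` of `A n`. -/
def e0 : (n : ℕ) → CD n
  | 0 => (1 : ℝ)
  | n + 1 => (e0 n, 0)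

/-- The element `ẽ₀ = (0, e₀)` of `A n` (junk value `0` for `n = 0`). -/
def te0 : (n : ℕ) → CD n
  | 0 => 0
  | n + 1 => (0, e0 n)

/-- The "complexification" `α̃ = (-b, a)` of `α = (a,b)` (junk value `0` for `n = 0`);
note `α̃ = α·ẽ₀`. -/
def tilde : {n : ℕ} → CD n → CD n
  | 0, _ => 0
  | _ + 1, x => (-x.2, x.1)

/-- The standard inner product on `A n ≅ ℝ^{2^n}`. -/
protected def inner : {n : ℕ} → CD n → CD n → ℝ
  | 0, x, y => (show ℝ from x) * (show ℝ from y)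
  | _ + 1, x, y => CD.inner x.1 y.1 + CD.inner x.2 y.2

/-- The euclidean norm on `A n`. -/
protected def norm {n : ℕ} (x : CD n) : ℝ := Real.sqrt (CD.inner x x)

/-- `x` is pure if its trace `t(x) = x + x̄` vanishes. -/
def IsPure {n : ℕ} (x : CD n) : Prop := x + CD.conj x = 0

/-- `x = (a,b)` is doubly pure if both `a` and `b` are pure
(equivalently, both `x` and `x̃` are pure). -/
def IsDoublyPure : {n : ℕ} → CD n → Prop
  | 0, x => x = 0
  | _ + 1, x => IsPure x.1 ∧ IsPure x.2

/-- The associator `(x,y,z) = (xy)z - x(yz)`. -/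
def assoc {n : ℕ} (x y z : CD n) : CD n := (x * y) * z - x * (y * z)

/-- The subspace `ℍ_a`: the real span of `{e₀, ã, a, ẽ₀}`. -/
def Ha {n : ℕ} (a : CD n) : Submodule ℝ (CD n) :=
  Submodule.span ℝ {e0 n, tilde a, a, te0 n}

/-- The orthogonal complement `ℍ_a^⊥` of `ℍ_a` in `A n`. -/
def HaPerp {n : ℕ} (a : CD n) : Set (CD n) :=
  {x | ∀ y ∈ Ha a, CD.inner x y = 0}

/-- The element `ε = (ẽ₀, 0)` of `A (n+1)`. -/
def eps (n : ℕ) : CD (n + 1) := (te0 n, 0)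

/-- `α̂ = (b,a)` for `α = (a,b) ∈ A (n+1)`. -/
def hat {n : ℕ} (x : CD (n + 1)) : CD (n + 1) := (x.2, x.1)

/-- The element `(a, b)` of `A (n+1) = A n × A n`. -/
def pair {n : ℕ} (a b : CD n) : CD (n + 1) := (a, b)


lemma mul_def {n : ℕ} (x y : CD (n + 1)) :
    x * y = (x.1 * y.1 - CD.conj y.2 * x.2, y.2 * x.1 + x.2 * CD.conj y.1) := rfl

@[simp] lemma conj_zero : ∀ {n : ℕ}, CD.conj (0 : CD n) = 0
  | 0 => rfl
  | n + 1 => by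
    show ((CD.conj (0 : CD n), -(0 : CD n)) : CD n × CD n) = (0, 0)
    rw [conj_zero, neg_zero]

@[simp] lemma conj_neg : ∀ {n : ℕ} (x : CD n), CD.conj (-x) = -CD.conj x
  | 0, x => rfl
  | n + 1, x => by
    show ((CD.conj (-x.1), -(-x.2)) : CD n × CD n) = (-CD.conj x.1, -(-x.2))
    rw [conj_neg]

lemma zero_mul_and : ∀ {n : ℕ} (x : CD n), (0 : CD n) * x = 0 ∧ x * (0 : CD n) = 0
  | 0, x => ⟨zero_mul (show ℝ from x), mul_zero (show ℝ from x)⟩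
  | n + 1, x => by
    constructor
    · show ((0 : CD n) * x.1 - CD.conj x.2 * (0 : CD n),
        x.2 * (0 : CD n) + (0 : CD n) * CD.conj x.1) = ((0 : CD n), (0 : CD n))
      rw [(zero_mul_and x.1).1, (zero_mul_and (CD.conj x.2)).2, (zero_mul_and x.2).2,
        (zero_mul_and (CD.conj x.1)).1, sub_zero, add_zero]
    · show (x.1 * (0 : CD n) - CD.conj (0 : CD n) * x.2,
        (0 : CD n) * x.1 + x.2 * CD.conj (0 : CD n)) = ((0 : CD n), (0 : CD n))
      rw [conj_zero, (zero_mul_and x.1).2, (zero_mul_and x.2).1, (zero_mul_and x.2).2,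
        (zero_mul_and x.1).1, sub_zero, add_zero]

@[simp] lemma zmul {n : ℕ} (x : CD n) : (0 : CD n) * x = 0 := (zero_mul_and x).1
@[simp] lemma mulz {n : ℕ} (x : CD n) : x * (0 : CD n) = 0 := (zero_mul_and x).2

lemma neg_mul_and : ∀ {n : ℕ} (x y : CD n), (-x) * y = -(x * y) ∧ x * (-y) = -(x * y)
  | 0, x, y => ⟨neg_mul (show ℝ from x) y, mul_neg (show ℝ from x) y⟩
  | n + 1, x, y => by
    constructor
    · show ((-x.1) * y.1 - CD.conj y.2 * (-x.2), y.2 * (-x.1) + (-x.2) * CD.conj y.1)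
        = (-(x.1 * y.1 - CD.conj y.2 * x.2), -(y.2 * x.1 + x.2 * CD.conj y.1))
      rw [(neg_mul_and x.1 y.1).1, (neg_mul_and (CD.conj y.2) x.2).2,
        (neg_mul_and y.2 x.1).2, (neg_mul_and x.2 (CD.conj y.1)).1]
      refine Prod.ext ?_ ?_ <;> abel
    · show (x.1 * (-y.1) - CD.conj (-y.2) * x.2, (-y.2) * x.1 + x.2 * CD.conj (-y.1))
        = (-(x.1 * y.1 - CD.conj y.2 * x.2), -(y.2 * x.1 + x.2 * CD.conj y.1))
      rw [conj_neg, conj_neg, (neg_mul_and x.1 y.1).2, (neg_mul_and (CD.conj y.2) x.2).1,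
        (neg_mul_and y.2 x.1).1, (neg_mul_and x.2 (CD.conj y.1)).2]
      refine Prod.ext ?_ ?_ <;> abel

@[simp] lemma nmul {n : ℕ} (x y : CD n) : (-x) * y = -(x * y) := (neg_mul_and x y).1
@[simp] lemma muln {n : ℕ} (x y : CD n) : x * (-y) = -(x * y) := (neg_mul_and x y).2

@[simp] lemma conj_e0 : ∀ {n : ℕ}, CD.conj (e0 n) = e0 n
  | 0 => rfl
  | n + 1 => by
    show ((CD.conj (e0 n), -(0 : CD n)) : CD n × CD n) = (e0 n, 0)
    rw [conj_e0, neg_zero]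

lemma e0_mul_and : ∀ {n : ℕ} (x : CD n), e0 n * x = x ∧ x * e0 n = x
  | 0, x => ⟨one_mul (show ℝ from x), mul_one (show ℝ from x)⟩
  | n + 1, x => by
    constructor
    · show (e0 n * x.1 - CD.conj x.2 * (0 : CD n), x.2 * e0 n + (0 : CD n) * CD.conj x.1)
        = (x.1, x.2)
      rw [(e0_mul_and x.1).1, mulz, (e0_mul_and x.2).2, zmul, sub_zero, add_zero]
    · show (x.1 * e0 n - CD.conj (0 : CD n) * x.2, (0 : CD n) * x.1 + x.2 * CD.conj (e0 n))
        = (x.1, x.2)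
      rw [conj_zero, conj_e0, (e0_mul_and x.1).2, zmul, zmul, (e0_mul_and x.2).2,
        sub_zero, zero_add]

@[simp] lemma e0mul {n : ℕ} (x : CD n) : e0 n * x = x := (e0_mul_and x).1
@[simp] lemma mule0 {n : ℕ} (x : CD n) : x * e0 n = x := (e0_mul_and x).2

@[simp] lemma inner_zero_right : ∀ {n : ℕ} (x : CD n), CD.inner x (0 : CD n) = 0
  | 0, x => mul_zero (show ℝ from x)
  | n + 1, x => by
    show CD.inner x.1 (0 : CD n) + CD.inner x.2 (0 : CD n) = 0
    rw [inner_zero_right, inner_zero_right, add_zero]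

lemma inner_add_right : ∀ {n : ℕ} (x y z : CD n),
    CD.inner x (y + z) = CD.inner x y + CD.inner x z
  | 0, x, y, z => mul_add (show ℝ from x) y z
  | n + 1, x, y, z => by
    show CD.inner x.1 (y.1 + z.1) + CD.inner x.2 (y.2 + z.2) = _
    rw [inner_add_right, inner_add_right]
    show _ = CD.inner x.1 y.1 + CD.inner x.2 y.2 + (CD.inner x.1 z.1 + CD.inner x.2 z.2)
    ring

lemma inner_smul_right : ∀ {n : ℕ} (r : ℝ) (x y : CD n),
    CD.inner x (r • y) = r * CD.inner x y
  | 0, r, x, y => by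
    show (show ℝ from x) * (r • (show ℝ from y) : ℝ)
      = r * ((show ℝ from x) * (show ℝ from y))
    rw [smul_eq_mul]; ring
  | n + 1, r, x, y => by
    show CD.inner x.1 (r • y.1) + CD.inner x.2 (r • y.2) = _
    rw [inner_smul_right, inner_smul_right]
    show _ = r * (CD.inner x.1 y.1 + CD.inner x.2 y.2)
    ring

lemma isPure_neg {n : ℕ} {x : CD n} (h : IsPure x) : IsPure (-x) := by
  unfold IsPure at *
  rw [conj_neg, show -x + -CD.conj x = -(x + CD.conj x) by abel, h, neg_zero]

lemma isPure_fst {n : ℕ} {x : CD (n + 1)} (h : IsPure x) : IsPure x.1 := by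
  unfold IsPure at *
  have : (x + CD.conj x).1 = 0 := by rw [h]; rfl
  exact this

lemma isPure_of_fst {n : ℕ} {x : CD (n + 1)} (h : IsPure x.1) : IsPure x := by
  unfold IsPure at *
  show ((x.1 + CD.conj x.1, x.2 + -x.2) : CD n × CD n) = (0, 0)
  rw [h, add_neg_cancel]

lemma inner_e0_of_pure : ∀ {n : ℕ} {x : CD n}, IsPure x → CD.inner x (e0 n) = 0
  | 0, x, h => by
    have h' : (show ℝ from x) + (show ℝ from x) = 0 := h
    have hx : (show ℝ from x) = 0 := by linarith
    show (show ℝ from x) * (1 : ℝ) = 0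
    rw [hx, zero_mul]
  | n + 1, x, h => by
    show CD.inner x.1 (e0 n) + CD.inner x.2 (0 : CD n) = 0
    rw [inner_e0_of_pure (isPure_fst h), inner_zero_right, add_zero]

lemma inner_te0_of_dp {n : ℕ} {x : CD (n + 1)} (h : IsDoublyPure x) :
    CD.inner x (te0 (n + 1)) = 0 := by
  show CD.inner x.1 (0 : CD n) + CD.inner x.2 (e0 n) = 0
  rw [inner_zero_right, inner_e0_of_pure h.2, zero_add]

lemma mem_haPerp_of {n : ℕ} {c x : CD n}
    (h1 : CD.inner x (e0 n) = 0) (h2 : CD.inner x (tilde c) = 0)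
    (h3 : CD.inner x c = 0) (h4 : CD.inner x (te0 n) = 0) :
    x ∈ HaPerp c := by
  intro y hy
  induction hy using Submodule.span_induction with
  | mem z hz =>
    simp only [Set.mem_insert_iff, Set.mem_singleton_iff] at hz
    rcases hz with rfl | rfl | rfl | rfl <;> assumption
  | zero => exact inner_zero_right x
  | add u v _ _ hu hv => rw [inner_add_right, hu, hv, add_zero]
  | smul r u _ hu => rw [inner_smul_right, hu, mul_zero]

lemma conj_of_pure {n : ℕ} {x : CD n} (h : IsPure x) : CD.conj x = -x := by
  unfold IsPure at h; linear_combination (norm := abel) h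

lemma mul_te0 {n : ℕ} (x : CD (n + 1)) : x * te0 (n + 1) = tilde x := by
  show (x.1 * (0 : CD n) - CD.conj (e0 n) * x.2, e0 n * x.1 + x.2 * CD.conj (0 : CD n))
    = (-x.2, x.1)
  simp

lemma mul_conj_te0 {n : ℕ} (x : CD (n + 1)) :
    x * CD.conj (te0 (n + 1)) = -tilde x := by
  show (x.1 * CD.conj (0 : CD n) - CD.conj (-e0 n) * x.2,
      (-e0 n) * x.1 + x.2 * CD.conj (CD.conj (0 : CD n))) = (-(-x.2), -x.1)
  simp

lemma conj_te0_mul {n : ℕ} {x : CD (n + 1)} (h : IsDoublyPure x) :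
    CD.conj (te0 (n + 1)) * x = tilde x := by
  show (CD.conj (0 : CD n) * x.1 - CD.conj x.2 * (-e0 n),
      x.2 * CD.conj (0 : CD n) + (-e0 n) * CD.conj x.1) = (-x.2, x.1)
  rw [conj_of_pure h.1, conj_of_pure h.2]
  simp

lemma te0_mul {n : ℕ} {x : CD (n + 1)} (h : IsDoublyPure x) :
    te0 (n + 1) * x = -tilde x := by
  show ((0 : CD n) * x.1 - CD.conj x.2 * e0 n, x.2 * (0 : CD n) + e0 n * CD.conj x.1)
    = (-(-x.2), -x.1)
  rw [conj_of_pure h.1, conj_of_pure h.2]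
  simp

lemma dp_neg {n : ℕ} {x : CD (n + 1)} (h : IsDoublyPure x) : IsDoublyPure (-x) :=
  ⟨isPure_neg h.1, isPure_neg h.2⟩

lemma dp_tilde {n : ℕ} {x : CD (n + 1)} (h : IsDoublyPure x) :
    IsDoublyPure (tilde x) := ⟨isPure_neg h.2, h.1⟩

lemma pair_mem_haPerp {n : ℕ} {u v : CD (n + 1)} (hu : IsDoublyPure u)
    (hv : IsDoublyPure v) : CD.pair u v ∈ HaPerp (eps (n + 1)) := by
  apply mem_haPerp_of
  · show CD.inner u (e0 (n + 1)) + CD.inner v (0 : CD (n + 1)) = 0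
    rw [inner_e0_of_pure (isPure_of_fst hu.1), inner_zero_right, add_zero]
  · show CD.inner u (-(0 : CD (n + 1))) + CD.inner v (te0 (n + 1)) = 0
    rw [neg_zero, inner_zero_right, inner_te0_of_dp hv, zero_add]
  · show CD.inner u (te0 (n + 1)) + CD.inner v (0 : CD (n + 1)) = 0
    rw [inner_te0_of_dp hu, inner_zero_right, add_zero]
  · show CD.inner u (0 : CD (n + 1)) + CD.inner v (e0 (n + 1)) = 0
    rw [inner_zero_right, inner_e0_of_pure (isPure_of_fst hv.1), zero_add]


end CD

/-- For `n ≥ 3` and `α = (a,b) ∈ ℍ_ε^⊥ ⊆ A (n+1)` (i.e. `a`, `b`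
doubly pure in `A n`):
(1) `αε = (ã, -b̃) ∈ ℍ_ε^⊥`;
(2) `αε̃ = α̃ε = -(αε)~ = (-b̃, -ã) ∈ ℍ_ε^⊥`. -/
theorem statement10 (n : ℕ) (hn : 3 ≤ n) (a b : CD n)
    (ha : CD.IsDoublyPure a) (hb : CD.IsDoublyPure b) :
    ((CD.pair a b) * CD.eps n = CD.pair (CD.tilde a) (-CD.tilde b) ∧
      (CD.pair a b) * CD.eps n ∈ CD.HaPerp (CD.eps n)) ∧
    ((CD.pair a b) * CD.tilde (CD.eps n) =
        CD.pair (-CD.tilde b) (-CD.tilde a) ∧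
      (CD.pair a b) * CD.tilde (CD.eps n) =
        CD.tilde (CD.pair a b) * CD.eps n ∧
      (CD.pair a b) * CD.tilde (CD.eps n) =
        -CD.tilde ((CD.pair a b) * CD.eps n) ∧
      (CD.pair a b) * CD.tilde (CD.eps n) ∈ CD.HaPerp (CD.eps n)) := by
  obtain ⟨k, rfl⟩ : ∃ k, n = k + 1 := ⟨n - 1, by omega⟩
  have h1 : CD.pair a b * CD.eps (k + 1) = CD.pair (CD.tilde a) (-CD.tilde b) := by
    show (a * CD.te0 (k + 1) - CD.conj (0 : CD (k + 1)) * b,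
        (0 : CD (k + 1)) * a + b * CD.conj (CD.te0 (k + 1)))
      = ((CD.tilde a : CD (k + 1)), -CD.tilde b)
    rw [CD.conj_zero, CD.zmul, CD.zmul, CD.mul_te0 a, CD.mul_conj_te0 b, sub_zero, zero_add]
  have heps : CD.tilde (CD.eps (k + 1)) = ((0 : CD (k + 1)), CD.te0 (k + 1)) := by
    show ((-(0 : CD (k + 1)), CD.te0 (k + 1)) : CD (k + 1) × CD (k + 1)) = _
    rw [neg_zero]
  have h2 : CD.pair a b * CD.tilde (CD.eps (k + 1))
      = CD.pair (-CD.tilde b) (-CD.tilde a) := by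
    rw [heps]
    show (a * (0 : CD (k + 1)) - CD.conj (CD.te0 (k + 1)) * b,
        CD.te0 (k + 1) * a + b * CD.conj (0 : CD (k + 1)))
      = ((-CD.tilde b : CD (k + 1)), -CD.tilde a)
    rw [CD.conj_zero, CD.mulz, CD.mulz, CD.conj_te0_mul hb, CD.te0_mul ha,
      zero_sub, add_zero]
  have h3 : CD.tilde (CD.pair a b) * CD.eps (k + 1)
      = CD.pair (-CD.tilde b) (-CD.tilde a) := by
    show ((-b) * CD.te0 (k + 1) - CD.conj (0 : CD (k + 1)) * a,
        (0 : CD (k + 1)) * (-b) + a * CD.conj (CD.te0 (k + 1)))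
      = ((-CD.tilde b : CD (k + 1)), -CD.tilde a)
    rw [CD.conj_zero, CD.zmul, CD.zmul, CD.nmul, CD.mul_te0 b, CD.mul_conj_te0 a,
      sub_zero, zero_add]
  have h4 : -CD.tilde (CD.pair (CD.tilde a) (-CD.tilde b))
      = CD.pair (-CD.tilde b) (-CD.tilde a) := by
    show ((-(-(-CD.tilde b)), -CD.tilde a) : CD (k + 1) × CD (k + 1))
      = ((-CD.tilde b : CD (k + 1)), -CD.tilde a)
    rw [neg_neg]
  refine ⟨⟨h1, ?_⟩, h2, h2.trans h3.symm, ?_, ?_⟩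
  · rw [h1]
    exact CD.pair_mem_haPerp (CD.dp_tilde ha) (CD.dp_neg (CD.dp_tilde hb))
  · rw [h2, h1]
    exact h4.symm
  · rw [h2]
    exact CD.pair_mem_haPerp (CD.dp_neg (CD.dp_tilde hb)) (CD.dp_neg (CD.dp_tilde ha))
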